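/- Let S : (𝔽₂)⁴ → 𝔽₂ be a balanced Boolean function of algebraic degree at most 2 (i.e. |S⁻¹(0)| = |S⁻¹(1)| = 8). Then the set V(S) = {u ∈ (𝔽₂)⁴ : the function x ↦ S(x+u)+S(x) is constant} is a linear subspace of (𝔽₂)⁴ of dimension at least 2. -/

import Mathlib

/-- The vector space `(𝔽₂)⁴`. -/
abbrev V4 := Fin 4 → ZMod 2

/-- The derivative `f̂_u : x ↦ f(x+u) + f(x)`. -/
def deriv4 (f : V4 → V4) (u x : V4) : V4 := f (x + u) + f x

/-- The 𝔽₂-dot product on `(𝔽₂)⁴`. -/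
def dot4 (v w : V4) : ZMod 2 := ∑ i, v i * w i

/-- `f` is weakly APN: for every `u ≠ 0`, `|Im f̂_u| > 4 = 2^{4-2}`. -/
def WeaklyAPN4 (f : V4 → V4) : Prop :=
  ∀ u : V4, u ≠ 0 → 4 < (Set.range (deriv4 f u)).ncard

/-- `f` is 4-differentially uniform. -/
def DiffUnif4 (f : V4 → V4) : Prop :=
  ∀ u : V4, u ≠ 0 → ∀ v : V4, {x : V4 | deriv4 f u x = v}.ncard ≤ 4

/-- The coefficient of the monomial `∏_{i ∈ S} xᵢ` in the algebraic normal form of `g`. -/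
def anfCoeff (g : V4 → ZMod 2) (S : Finset (Fin 4)) : ZMod 2 :=
  ∑ x ∈ Finset.univ.filter (fun x : V4 => ∀ i, x i = 1 → i ∈ S), g x

/-- The algebraic degree of `g` is at most `d`. -/
def DegLE (g : V4 → ZMod 2) (d : ℕ) : Prop :=
  ∀ S : Finset (Fin 4), d < S.card → anfCoeff g S = 0

/-- The algebraic degree of `g` equals `d`. -/
def DegEq (g : V4 → ZMod 2) (d : ℕ) : Prop := DegLE g d ∧ ¬ DegLE g (d - 1)

/-- The component function `⟨f, v⟩ : x ↦ ⟨f(x), v⟩`. -/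
def comp4 (f : V4 → V4) (v : V4) (x : V4) : ZMod 2 := dot4 (f x) v

/-- `n₃(f)`: the number of nonzero `v` with `deg⟨f,v⟩ = 3`. -/
noncomputable def n3 (f : V4 → V4) : ℕ := {v : V4 | v ≠ 0 ∧ DegEq (comp4 f v) 3}.ncard

/-- The Walsh coefficient `W_f(a,b) = Σ_x (-1)^{⟨f(x),b⟩ + ⟨x,a⟩}`. -/
def walsh (f : V4 → V4) (a b : V4) : ℤ :=
  ∑ x : V4, (-1 : ℤ) ^ (dot4 (f x) b + dot4 x a).val

/-- `Lin(f) = n`: `n` is the maximum of `|W_f(a,b)|` over all `a` and nonzero `b`. -/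
def LinEq (f : V4 → V4) (n : ℤ) : Prop :=
  IsGreatest {t : ℤ | ∃ a b : V4, b ≠ 0 ∧ t = |walsh f a b|} n

/-- `a` has Hamming weight 1. -/
def Wt1 (a : V4) : Prop := {i : Fin 4 | a i ≠ 0}.ncard = 1

/-- `Lin₁(f) = n`: max of `|W_f(a,b)|` over `a, b` of Hamming weight 1. -/
def Lin1Eq (f : V4 → V4) (n : ℤ) : Prop :=
  IsGreatest {t : ℤ | ∃ a b : V4, Wt1 a ∧ Wt1 b ∧ t = |walsh f a b|} n

/-- `Diff₁(f) = n`: max of `|{x : f̂_a(x) = b}|` over `a, b` of Hamming weight 1. -/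
def Diff1Eq (f : V4 → V4) (n : ℕ) : Prop :=
  IsGreatest {t : ℕ | ∃ a b : V4, Wt1 a ∧ Wt1 b ∧ t = {x : V4 | deriv4 f a x = b}.ncard} n

/-- `f` is strongly 2-anti-invariant. -/
def StronglyAntiInv2 (f : V4 → V4) : Prop :=
  ∀ V W : Submodule (ZMod 2) V4, f '' (V : Set V4) = (W : Set V4) →
    (Module.finrank (ZMod 2) V = Module.finrank (ZMod 2) W ∧ Module.finrank (ZMod 2) W < 2)
    ∨ (V = ⊤ ∧ W = ⊤)

/-- Identify `k : ℕ` with a vector of `(𝔽₂)⁴` via binary digits. -/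
def toVec (k : ℕ) : V4 := fun i => (((k / 2 ^ (i : ℕ)) % 2 : ℕ) : ZMod 2)

/-- Identify a vector of `(𝔽₂)⁴` with a natural number via binary digits. -/
def toNat4 (x : V4) : ℕ := ∑ i, (x i).val * 2 ^ (i : ℕ)

/-- The function on `(𝔽₂)⁴` given by a value table of integers. -/
def tableFun (L : List ℕ) (x : V4) : V4 := toVec (L.getD (toNat4 x) 0)


/-! The polar form `B(u, v) = S(u + v) + S u + S v + S 0` of a Boolean function of degree at most 2
is an alternating bilinear form, and `V(S)` is its radical. Splitting off hyperbolic planes shows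
that the radical of an alternating form has the parity of the dimension, so `dim V(S)` is even.
It is nonzero: otherwise every derivative `x ↦ S(x + u) + S x` with `u ≠ 0` would be a nonconstant
affine function, hence balanced, and the number of pairs `(x, u)` with `S(x + u) = S x` would be
`16 + 15 • 8`, whereas the balancedness of `S` makes it `16 • 8`. -/

open Finset Module

namespace LinearMap.IsAlt

variable {K V : Type*} [Field K] [AddCommGroup V] [Module K V] {B : V →ₗ[K] V →ₗ[K] K}

theorem finrank_inf_ker_add_two [FiniteDimensional K V] (hB : B.IsAlt) {v w : V}
    (hvw : B v w ≠ 0) : finrank K ↥(ker (B v) ⊓ ker (B w)) + 2 = finrank K V := by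
  have hwv : B w v ≠ 0 := by rw [← hB.neg]; exact neg_ne_zero.mpr hvw
  have hsurj : range ((B v).prod (B w)) = ⊤ := by
    refine range_eq_top.mpr fun ⟨a, b⟩ => ⟨(a / B v w) • w + (b / B w v) • v, ?_⟩
    simp [hB.self_eq_zero, hvw, hwv]
  rw [← ker_prod, ← finrank_range_add_finrank_ker ((B v).prod (B w)), hsurj, finrank_top,
    finrank_prod, finrank_self, add_comm]

theorem map_ker_compl₁₂_subtype (hB : B.IsAlt) {v w : V} (hvw : B v w ≠ 0) :
    (ker (B.compl₁₂ (ker (B v) ⊓ ker (B w)).subtype (ker (B v) ⊓ ker (B w)).subtype)).map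
      (ker (B v) ⊓ ker (B w)).subtype = ker B := by
  have hwv : B w v ≠ 0 := by rw [← hB.neg]; exact neg_ne_zero.mpr hvw
  ext x
  simp only [Submodule.mem_map, mem_ker, Submodule.coe_subtype]
  constructor
  · rintro ⟨⟨x, hvx, hwx⟩, hx, rfl⟩
    ext z
    set y := z - (B w z / B w v) • v - (B v z / B v w) • w
    have hy : y ∈ ker (B v) ⊓ ker (B w) := by
      constructor <;> simp [y, hB.self_eq_zero, hvw, hwv]
    have hxy : B x y = 0 := congr($hx ⟨y, hy⟩)
    have hxv : B x v = 0 := by rw [← hB.neg, mem_ker.mp hvx, neg_zero]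
    have hxw : B x w = 0 := by rw [← hB.neg, mem_ker.mp hwx, neg_zero]
    have hz : z = y + (B w z / B w v) • v + (B v z / B v w) • w := by simp only [y]; abel
    rw [hz]
    simp [hxy, hxv, hxw]
  · intro hx
    have hvx : B v x = 0 := by rw [← hB.neg, hx, zero_apply, neg_zero]
    have hwx : B w x = 0 := by rw [← hB.neg, hx, zero_apply, neg_zero]
    exact ⟨⟨x, hvx, hwx⟩, by ext; simp [hx], rfl⟩

theorem finrank_ker_modEq [FiniteDimensional K V] (hB : B.IsAlt) :
    finrank K (ker B) ≡ finrank K V [MOD 2] := by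
  induction hn : finrank K V using Nat.strong_induction_on generalizing V with
  | _ n ih =>
    subst hn
    by_cases hB0 : B = 0
    · rw [hB0, ker_zero, finrank_top]
    obtain ⟨v, w, hvw⟩ : ∃ v w, B v w ≠ 0 := by
      by_contra! h
      exact hB0 (ext₂ h)
    -- `W` is the orthogonal complement of the hyperbolic plane spanned by `v` and `w`.
    set W := ker (B v) ⊓ ker (B w)
    have hW : finrank K W + 2 = finrank K V := hB.finrank_inf_ker_add_two hvw
    have hBW : (B.compl₁₂ W.subtype W.subtype).IsAlt := fun x => hB x
    calc finrank K (ker B)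
        = finrank K (ker (B.compl₁₂ W.subtype W.subtype)) := by
          rw [← hB.map_ker_compl₁₂_subtype hvw, Submodule.finrank_map_subtype_eq]
      _ ≡ finrank K W [MOD 2] := ih _ (by omega) hBW rfl
      _ ≡ finrank K V [MOD 2] := by rw [← hW]; exact Nat.add_modEq_right.symm

end LinearMap.IsAlt

section Polar

variable {G R : Type*} [AddCommGroup G] [CommRing R]

def polar (f : G → R) (u v : G) : R := f (u + v) - f u - f v + f 0

theorem polar_comm (f : G → R) (u v : G) : polar f u v = polar f v u := by
  rw [polar, polar, add_comm u v]; ring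

@[simp] theorem polar_zero_left (f : G → R) (v : G) : polar f 0 v = 0 := by
  simp [polar]

@[simp] theorem polar_zero_right (f : G → R) (u : G) : polar f u 0 = 0 := by
  simp [polar]

theorem polar_add (f g : G → R) (u v : G) : polar (f + g) u v = polar f u v + polar g u v := by
  simp only [polar, Pi.add_apply]; ring

theorem polar_smul (c : R) (f : G → R) (u v : G) : polar (c • f) u v = c * polar f u v := by
  simp only [polar, Pi.smul_apply, smul_eq_mul]; ring

variable (G R) in
def quadraticFunctions : Submodule R (G → R) where
  carrier := {f | ∀ u u' v, polar f (u + u') v = polar f u v + polar f u' v}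
  add_mem' hf hg u u' v := by simp only [polar_add, hf u u' v, hg u u' v]; ring
  zero_mem' _ _ _ := by simp [polar]
  smul_mem' c _ hf u u' v := by simp only [polar_smul, hf u u' v]; ring

theorem prod_mem_quadraticFunctions {ι : Type*} [DecidableEq ι] {T : Finset ι} (hT : #T ≤ 2) :
    (fun x : ι → R => ∏ i ∈ T, x i) ∈ quadraticFunctions (ι → R) R := by
  intro u u' v
  obtain h | h | h : #T = 0 ∨ #T = 1 ∨ #T = 2 := by omega
  · simp [card_eq_zero.mp h, polar]
  · obtain ⟨i, rfl⟩ := card_eq_one.mp h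
    simp [polar]
  · obtain ⟨i, j, hij, rfl⟩ := card_eq_two.mp h
    simp only [polar, prod_pair hij, Pi.add_apply, Pi.zero_apply]
    ring

end Polar

theorem ZMod.eq_zero_or_eq_one (a : ZMod 2) : a = 0 ∨ a = 1 := by
  revert a; decide

theorem add_add_eq_polar_add {G : Type*} [AddCommGroup G] (f : G → ZMod 2) (u x : G) :
    f (x + u) + f x = polar f u x + (f u + f 0) := by
  simp only [polar, add_comm u x, CharTwo.sub_eq_add]; ring_nf; reduce_mod_char

section Radical

variable {V : Type*} [AddCommGroup V] [Module (ZMod 2) V]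

theorem polar_smul_left (f : V → ZMod 2) (c : ZMod 2) (u v : V) :
    polar f (c • u) v = c * polar f u v := by
  obtain rfl | rfl := ZMod.eq_zero_or_eq_one c <;> simp

def polarBilin (f : V → ZMod 2) (hf : f ∈ quadraticFunctions V (ZMod 2)) :
    V →ₗ[ZMod 2] V →ₗ[ZMod 2] ZMod 2 :=
  LinearMap.mk₂ (ZMod 2) (polar f) hf (polar_smul_left f)
    (fun u v v' => by simp only [polar_comm f u]; exact hf v v' u)
    (fun c u v => by simp only [polar_comm f u, polar_smul_left, smul_eq_mul])

variable {f : V → ZMod 2} {hf : f ∈ quadraticFunctions V (ZMod 2)}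

@[simp] theorem polarBilin_apply (u v : V) : polarBilin f hf u v = polar f u v := rfl

theorem isAlt_polarBilin : (polarBilin f hf).IsAlt := fun u => by
  simp only [polarBilin_apply, polar, ZModModule.add_self]; ring_nf; reduce_mod_char

theorem coe_ker_polarBilin :
    (LinearMap.ker (polarBilin f hf) : Set V) = {u | ∃ c, ∀ x, f (x + u) + f x = c} := by
  ext u
  simp only [SetLike.mem_coe, LinearMap.mem_ker, LinearMap.ext_iff, polarBilin_apply,
    LinearMap.zero_apply, add_add_eq_polar_add]
  constructor
  · exact fun h => ⟨f u + f 0, fun x => by rw [h, zero_add]⟩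
  · rintro ⟨c, hc⟩ x
    have h0 := hc 0
    rw [polar_zero_right, zero_add] at h0
    rw [← h0] at hc
    exact add_eq_right.mp (hc x)

end Radical

section Counting

variable {V : Type*} [AddCommGroup V] [Module (ZMod 2) V] [Fintype V]

theorem LinearMap.two_mul_card_fiber_eq_card {φ : V →ₗ[ZMod 2] ZMod 2} (hφ : φ ≠ 0)
    (c : ZMod 2) : 2 * #{x | φ x = c} = Fintype.card V := by
  obtain ⟨z, hz⟩ : ∃ z, φ z ≠ 0 := by
    by_contra! h
    exact hφ (LinearMap.ext h)
  have hrange (b : ZMod 2) : b ∈ Set.range φ :=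
    ⟨b • z, by rw [map_smul, (ZMod.eq_zero_or_eq_one _).resolve_left hz, smul_eq_mul, mul_one]⟩
  have hfib : Fintype.card V = ∑ b : ZMod 2, #{x | φ x = b} := by
    rw [← card_univ]
    exact card_eq_sum_card_fiberwise fun _ _ => mem_univ _
  rw [hfib, sum_congr rfl fun b _ =>
      AddMonoidHom.card_fiber_eq_of_mem_range φ (hrange b) (hrange c),
    sum_const, card_univ, ZMod.card, smul_eq_mul]

theorem sum_card_filter_add_eq {G β : Type*} [AddGroup G] [Fintype G] [DecidableEq β]
    (f : G → β) : ∑ u, #{x | f (x + u) = f x} = ∑ x, #{y | f y = f x} := by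
  simp_rw [card_filter]
  rw [sum_comm]
  exact sum_congr rfl fun x _ => Fintype.sum_equiv (Equiv.addLeft x) _ _ fun _ => rfl

theorem ker_polarBilin_ne_bot [DecidableEq V] {f : V → ZMod 2}
    {hf : f ∈ quadraticFunctions V (ZMod 2)} (hbal : ∀ c, 2 * #{x | f x = c} = Fintype.card V) :
    LinearMap.ker (polarBilin f hf) ≠ ⊥ := by
  intro hker
  have hshift : ∀ u ≠ 0, 2 * #{x | f (x + u) = f x} = Fintype.card V := by
    intro u hu
    have hne : polarBilin f hf u ≠ 0 := fun h =>
      hu (by simpa [hker] using LinearMap.mem_ker.mpr h)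
    have hiff (x : V) : f (x + u) = f x ↔ polarBilin f hf u x = f u + f 0 := by
      rw [← CharTwo.add_eq_zero, add_add_eq_polar_add, CharTwo.add_eq_zero, polarBilin_apply]
    simp_rw [hiff]
    exact LinearMap.two_mul_card_fiber_eq_card hne _
  have hsum := congr(2 * $(sum_card_filter_add_eq f))
  rw [mul_sum, mul_sum, ← add_sum_erase _ _ (mem_univ 0),
    sum_congr rfl fun u hu => hshift u (ne_of_mem_erase hu)] at hsum
  simp only [add_zero, filter_true, card_univ, hbal, sum_const, card_erase_of_mem (mem_univ _),
    smul_eq_mul] at hsum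
  obtain ⟨n, hn⟩ : ∃ n, Fintype.card V = n + 1 :=
    Nat.exists_eq_succ_of_ne_zero Fintype.card_ne_zero
  rw [hn, Nat.add_sub_cancel] at hsum
  nlinarith

end Counting

theorem Finset.cast_card_Icc_zmod_two {α : Type*} [DecidableEq α] (s t : Finset α) :
    (#(Icc s t) : ZMod 2) = if s = t then 1 else 0 := by
  split_ifs with hst
  · simp [hst]
  by_cases hsub : s ⊆ t
  · have hlt : #s < #t := card_lt_card (ssubset_of_subset_of_ne hsub hst)
    obtain ⟨k, hk⟩ : ∃ k, #t - #s = k + 1 := ⟨#t - #s - 1, by omega⟩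
    rw [card_Icc_finset hsub, hk, pow_succ, Nat.cast_mul, ZMod.natCast_self, mul_zero]
  · rw [Icc_eq_empty hsub, card_empty, Nat.cast_zero]

section Ones

variable {ι : Type*} [Fintype ι]

def ones (x : ι → ZMod 2) : Finset ι := {i | x i = 1}

theorem ones_injective : Function.Injective (ones (ι := ι)) := by
  intro x y hxy
  funext i
  have hi : x i = 1 ↔ y i = 1 := by simpa [ones] using congr(i ∈ $hxy)
  rcases ZMod.eq_zero_or_eq_one (x i) with hx | hx <;>
    rcases ZMod.eq_zero_or_eq_one (y i) with hy | hy <;> simp_all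

theorem prod_eq_ite_subset_ones [DecidableEq ι] (T : Finset ι) (x : ι → ZMod 2) :
    ∏ i ∈ T, x i = if T ⊆ ones x then 1 else 0 := by
  split_ifs with h
  · exact prod_eq_one fun i hi => by simpa [ones] using h hi
  · obtain ⟨i, hiT, hi⟩ := not_subset.mp h
    exact prod_eq_zero hiT <| (ZMod.eq_zero_or_eq_one _).resolve_right (by simpa [ones] using hi)

end Ones

-- Möbius inversion on the Boolean lattice, where every nontrivial interval has even size.
theorem eq_sum_anfCoeff_smul_prod (g : V4 → ZMod 2) :
    g = ∑ T, anfCoeff g T • fun x : V4 => ∏ i ∈ T, x i := by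
  funext x
  have hcoeff (T : Finset (Fin 4)) : anfCoeff g T = ∑ z with ones z ⊆ T, g z := by
    simp only [anfCoeff, ones, subset_iff, mem_filter, mem_univ, true_and]
  calc g x = ∑ z, g z * if z = x then 1 else 0 := by simp
    _ = ∑ z, g z * ∑ T, if ones z ⊆ T ∧ T ⊆ ones x then 1 else 0 := by
      refine sum_congr rfl fun z _ => ?_
      have hIcc : ({T | ones z ⊆ T ∧ T ⊆ ones x} : Finset _) = Icc (ones z) (ones x) := by
        ext; simp
      rw [sum_boole, hIcc, cast_card_Icc_zmod_two]
      simp only [ones_injective.eq_iff]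
    _ = ∑ T, anfCoeff g T * ∏ i ∈ T, x i := by
      simp_rw [hcoeff, prod_eq_ite_subset_ones, sum_mul, mul_sum]
      rw [sum_comm]
      refine sum_congr rfl fun T _ => ?_
      rw [sum_filter]
      refine sum_congr rfl fun z _ => ?_
      split_ifs <;> simp_all
    _ = _ := by simp [Finset.sum_apply]

theorem mem_quadraticFunctions_of_degLE_two {g : V4 → ZMod 2} (hg : DegLE g 2) :
    g ∈ quadraticFunctions V4 (ZMod 2) := by
  rw [eq_sum_anfCoeff_smul_prod g]
  refine Submodule.sum_mem _ fun T _ => ?_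
  by_cases hT : #T ≤ 2
  · exact Submodule.smul_mem _ _ (prod_mem_quadraticFunctions hT)
  · rw [hg T (by omega), zero_smul]
    exact Submodule.zero_mem _

/-- If `S : (𝔽₂)⁴ → 𝔽₂` is a balanced Boolean function of algebraic degree at most 2,
then `V(S) = {u : x ↦ S(x+u) + S(x) is constant}` is a linear subspace of `(𝔽₂)⁴`
of dimension at least 2. -/
theorem linear_structures_of_balanced_quadratic
    (S : V4 → ZMod 2)
    (hbal0 : {x : V4 | S x = 0}.ncard = 8) (hbal1 : {x : V4 | S x = 1}.ncard = 8)
    (hdeg : DegLE S 2) :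
    ∃ V : Submodule (ZMod 2) V4,
      (V : Set V4) = {u : V4 | ∃ c : ZMod 2, ∀ x : V4, S (x + u) + S x = c} ∧
      2 ≤ Module.finrank (ZMod 2) V := by
  have hS := mem_quadraticFunctions_of_degLE_two hdeg
  have hbal (c : ZMod 2) : 2 * #{x | S x = c} = Fintype.card V4 := by
    rw [← Set.toFinset_ofPred, ← Set.ncard_eq_toFinset_card']
    obtain rfl | rfl := ZMod.eq_zero_or_eq_one c
    · rw [hbal0]; rfl
    · rw [hbal1]; rfl
  refine ⟨LinearMap.ker (polarBilin S hS), coe_ker_polarBilin, ?_⟩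
  have hpar := (isAlt_polarBilin (hf := hS)).finrank_ker_modEq
  have hpos := Submodule.finrank_eq_zero.not.mpr (ker_polarBilin_ne_bot (hf := hS) hbal)
  rw [finrank_fin_fun] at hpar
  unfold Nat.ModEq at hpar
  omega
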